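/- arXiv:2201.08198 — 4 statements merged into one kernel-verified Lean document; each statement's English description precedes it below -/
import Mathlib

section
/- (Generalized Fell absorption principle) Let G be a discrete groupoid, X a right Hilbert C*-module, and π a representation of G in the adjointable operators L(X). Define W on ℓ²(G) ⊗ X (the exterior tensor product) by W(e_f ⊗ ξ) = e_f ⊗ π(f)ξ. Then W is a partial isometry in L(ℓ²(G) ⊗ X), and for every morphism g, W(λ_g ⊗ I)W* = λ_g ⊗ π(g), where λ is the left regular representation of G. -/
/-!
Since `π(f)* = π(f⁻¹)`, the adjoint acts on elementary tensors by `W*(e_f ⊗ ξ) = e_f ⊗ π(f⁻¹)ξ`;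
testing against elementary tensors suffices because their span is dense and the inner product is
definite. Both identities then only have to be checked on elementary tensors, where
they become the groupoid relations `π(f) π(f⁻¹) π(f) = π(f)` and `π(gf) π(f⁻¹) = π(g)`.
-/

open CategoryTheory ContinuousLinearMap
open scoped Classical

universe v u w u'

def Mor (V : Type v) [Groupoid V] := Σ (x : V) (y : V), x ⟶ y

namespace Mor

variable {V : Type v} [Groupoid V]

def src (f : Mor V) : V := f.1
def tgt (f : Mor V) : V := f.2.1
def hom (f : Mor V) : f.src ⟶ f.tgt := f.2.2

def comp (g f : Mor V) (h : f.tgt = g.src) : Mor V :=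
  ⟨f.src, g.tgt, f.hom ≫ eqToHom h ≫ g.hom⟩

def inv (f : Mor V) : Mor V := ⟨f.tgt, f.src, Groupoid.inv f.hom⟩
def id (x : V) : Mor V := ⟨x, x, 𝟙 x⟩

end Mor

namespace Mor

variable {V : Type*} [Groupoid V]

theorem inv_comp_self (f : Mor V) : f.inv.comp f rfl = Mor.id f.src := by
  obtain ⟨x, y, f⟩ := f
  change (⟨x, x, f ≫ eqToHom (rfl : y = y) ≫ Groupoid.inv f⟩ : Mor V) = ⟨x, x, 𝟙 x⟩
  simp

theorem comp_id (f : Mor V) : f.comp (Mor.id f.src) rfl = f := by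
  obtain ⟨x, y, f⟩ := f
  change (⟨x, y, 𝟙 x ≫ eqToHom (rfl : x = x) ≫ f⟩ : Mor V) = ⟨x, y, f⟩
  simp

theorem comp_comp_inv (g f : Mor V) (h : f.tgt = g.src) : (g.comp f h).comp f.inv rfl = g := by
  obtain ⟨x, y, f⟩ := f
  obtain ⟨y', z, g⟩ := g
  dsimp only [Mor.tgt, Mor.src] at h
  subst h
  change (⟨y, z, Groupoid.inv f ≫ eqToHom rfl ≫ f ≫ eqToHom rfl ≫ g⟩ : Mor V) = ⟨y, z, g⟩
  simp

variable {M : Type*} [Monoid M] {π : Mor V → M}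

theorem map_mul_inv_mul_self
    (hπ : ∀ (f g : Mor V) (h : g.tgt = f.src), π f * π g = π (f.comp g h)) (f : Mor V) : π f * π f.inv * π f = π f := by
  rw [mul_assoc, hπ f.inv f rfl, inv_comp_self, hπ f _ rfl, comp_id]

theorem map_comp_mul_map_inv
    (hπ : ∀ (f g : Mor V) (h : g.tgt = f.src), π f * π g = π (f.comp g h))
    (g f : Mor V) (h : f.tgt = g.src) : π (g.comp f h) * π f.inv = π g := by
  rw [hπ _ _ rfl, comp_comp_inv]

end Mor

theorem eq_of_forall_inner_eq_of_dense_span {ι X Y A : Type*}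
    [TopologicalSpace Y] [AddCommGroup Y] [Module ℂ Y]
    [TopologicalSpace A] [T2Space A] [AddCommGroup A] [Module ℂ A] [StarAddMonoid A]
    (inn : Y → Y → A)
    (hadd : ∀ u v₁ v₂, inn u (v₁ + v₂) = inn u v₁ + inn u v₂)
    (hsmul : ∀ (c : ℂ) u v, inn u (c • v) = c • inn u v)
    (hstar : ∀ u v, star (inn u v) = inn v u)
    (hdef : ∀ u, inn u u = 0 → u = 0)
    (hcont : ∀ u, Continuous (inn u))
    {e : ι → X → Y} (he : Dense (Submodule.span ℂ (⋃ i, Set.range (e i)) : Set Y))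
    {a b : Y} (h : ∀ i x, inn (e i x) a = inn (e i x) b) : a = b := by
  let innRight : Y → Y →L[ℂ] A := fun u => ⟨⟨⟨inn u, hadd u⟩, (hsmul · u)⟩, hcont u⟩
  have hvanish : innRight (a - b) = 0 := by
    refine ContinuousLinearMap.ext_on he ?_
    rintro _ ⟨_, ⟨i, rfl⟩, x, rfl⟩
    calc inn (a - b) (e i x) = star (innRight (e i x) (a - b)) := (hstar _ _).symm
      _ = 0 := by
        rw [map_sub, show innRight (e i x) a = innRight (e i x) b from h i x, sub_self, star_zero]
  exact sub_eq_zero.mp (hdef _ (DFunLike.congr_fun hvanish (a - b)))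

theorem statement5_general {V : Type v} [Groupoid V]
    {A : Type u} [NonUnitalCStarAlgebra A]
    -- the Hilbert module `X`
    {X : Type w} [NormedAddCommGroup X] [NormedSpace ℂ X]
    (innX : X → X → A)
    -- the representation `π` of `G` in `L(X)`
    (π : Mor V → (X →L[ℂ] X))
    (hπmul : ∀ (f g : Mor V) (h : g.tgt = f.src), π f ∘L π g = π (f.comp g h))
    (hπadj : ∀ (f : Mor V) (ξ η : X), innX (π f ξ) η = innX ξ (π f.inv η))
    -- the exterior tensor product `Y = ℓ²(G) ⊗ X`
    {Y : Type u'} [NormedAddCommGroup Y] [NormedSpace ℂ Y]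
    (innY : Y → Y → A)
    (hYadd : ∀ u v₁ v₂, innY u (v₁ + v₂) = innY u v₁ + innY u v₂)
    (hYsmul : ∀ (c : ℂ) u v, innY u (c • v) = c • innY u v)
    (hYstar : ∀ u v, star (innY u v) = innY v u)
    (hYdef : ∀ u, innY u u = 0 → u = 0)
    (hYcont : Continuous fun p : Y × Y => innY p.1 p.2)
    -- elementary tensors `e_f ⊗ ξ`
    (te : Mor V → (X →L[ℂ] Y))
    (hte : ∀ (f g : Mor V) (ξ η : X),
      innY (te f ξ) (te g η) = if f = g then innX ξ η else 0)
    (hdense : Dense (↑(Submodule.span ℂ (⋃ f : Mor V, Set.range (te f))) : Set Y))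
    -- the operator `W` and its adjoint
    (W Wstar : Y →L[ℂ] Y)
    (hW : ∀ (f : Mor V) (ξ : X), W (te f ξ) = te f (π f ξ))
    (hWadj : ∀ u v, innY (W u) v = innY u (Wstar v))
    -- `λ_g ⊗ I` and `λ_g ⊗ π(g)`
    (L Lpi : Mor V → (Y →L[ℂ] Y))
    (hL : ∀ (g f : Mor V) (ξ : X),
      L g (te f ξ) = if h : f.tgt = g.src then te (g.comp f h) ξ else 0)
    (hLpi : ∀ (g f : Mor V) (ξ : X),
      Lpi g (te f ξ) = if h : f.tgt = g.src then te (g.comp f h) (π g ξ) else 0) :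
    (W ∘L Wstar ∘L W = W) ∧ ∀ g : Mor V, W ∘L L g ∘L Wstar = Lpi g := by
  have hπ : ∀ (f g : Mor V) (h : g.tgt = f.src), π f * π g = π (f.comp g h) := hπmul
  have hWstar (f : Mor V) (η : X) : Wstar (te f η) = te f (π f.inv η) := by
    refine eq_of_forall_inner_eq_of_dense_span innY hYadd hYsmul hYstar hYdef
      (fun u => hYcont.comp (continuous_const.prodMk continuous_id)) hdense fun g ζ => ?_
    rw [← hWadj, hW, hte, hte]
    split_ifs with hgf
    · subst hgf
      exact hπadj g ζ η
    · rfl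
  have hext {T S : Y →L[ℂ] Y} (h : ∀ f ξ, T (te f ξ) = S (te f ξ)) : T = S :=
    ContinuousLinearMap.ext_on hdense (by rintro _ ⟨_, ⟨f, rfl⟩, ξ, rfl⟩; exact h f ξ)
  refine ⟨hext fun f ξ => ?_, fun g => hext fun f ξ => ?_⟩
  · rw [ContinuousLinearMap.comp_apply, ContinuousLinearMap.comp_apply, hW, hWstar, hW]
    exact congrArg (te f) (DFunLike.congr_fun (Mor.map_mul_inv_mul_self hπ f) ξ)
  · rw [ContinuousLinearMap.comp_apply, ContinuousLinearMap.comp_apply, hWstar, hL, hLpi]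
    split_ifs with h
    · rw [hW]
      exact congrArg (te _) (DFunLike.congr_fun (Mor.map_comp_mul_map_inv hπ g f h) ξ)
    · exact map_zero W

/-- Generalized Fell absorption principle.  Let `π` be a
representation of a discrete groupoid `G` in the adjointable operators of a
right Hilbert `A`-module `X` (the `A`-valued inner product is `innX`, and
adjoints are witnessed by `π(f)* = π(f⁻¹)`).  Let `Y = ℓ²(G) ⊗ X` be the
exterior tensor product, with `A`-valued inner product `innY`, elementary
tensors `te f ξ = e_f ⊗ ξ` whose span is dense, and let
`W(e_f ⊗ ξ) = e_f ⊗ π(f)ξ` with adjoint `Wstar`, `L g = λ_g ⊗ I` and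
`Lpi g = λ_g ⊗ π(g)`.  Then `W` is a partial isometry and
`W (λ_g ⊗ I) W* = λ_g ⊗ π(g)` for every morphism `g`. -/
theorem statement5 {V : Type v} [Groupoid V]
    {A : Type u} [NonUnitalCStarAlgebra A]
    -- the Hilbert module `X`
    {X : Type w} [NormedAddCommGroup X] [NormedSpace ℂ X]
    (innX : X → X → A)
    (hXadd : ∀ ξ η₁ η₂, innX ξ (η₁ + η₂) = innX ξ η₁ + innX ξ η₂)
    (hXsmul : ∀ (c : ℂ) ξ η, innX ξ (c • η) = c • innX ξ η)
    (hXstar : ∀ ξ η, star (innX ξ η) = innX η ξ)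
    (hXnorm : ∀ ξ, ‖ξ‖ ^ 2 = ‖innX ξ ξ‖)
    -- the representation `π` of `G` in `L(X)`
    (π : Mor V → (X →L[ℂ] X))
    (hπmul : ∀ (f g : Mor V) (h : g.tgt = f.src), π f ∘L π g = π (f.comp g h))
    (hπzero : ∀ f g : Mor V, g.tgt ≠ f.src → π f ∘L π g = 0)
    (hπadj : ∀ (f : Mor V) (ξ η : X), innX (π f ξ) η = innX ξ (π f.inv η))
    -- the exterior tensor product `Y = ℓ²(G) ⊗ X`
    {Y : Type u'} [NormedAddCommGroup Y] [NormedSpace ℂ Y] [CompleteSpace Y]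
    (innY : Y → Y → A)
    (hYadd : ∀ u v₁ v₂, innY u (v₁ + v₂) = innY u v₁ + innY u v₂)
    (hYsmul : ∀ (c : ℂ) u v, innY u (c • v) = c • innY u v)
    (hYstar : ∀ u v, star (innY u v) = innY v u)
    (hYnorm : ∀ u, ‖u‖ ^ 2 = ‖innY u u‖)
    (hYdef : ∀ u, innY u u = 0 → u = 0)
    (hYcont : Continuous fun p : Y × Y => innY p.1 p.2)
    -- elementary tensors `e_f ⊗ ξ`
    (te : Mor V → (X →L[ℂ] Y))
    (hte : ∀ (f g : Mor V) (ξ η : X),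
      innY (te f ξ) (te g η) = if f = g then innX ξ η else 0)
    (hdense : Dense (↑(Submodule.span ℂ (⋃ f : Mor V, Set.range (te f))) : Set Y))
    -- the operator `W` and its adjoint
    (W Wstar : Y →L[ℂ] Y)
    (hW : ∀ (f : Mor V) (ξ : X), W (te f ξ) = te f (π f ξ))
    (hWadj : ∀ u v, innY (W u) v = innY u (Wstar v))
    -- `λ_g ⊗ I` and `λ_g ⊗ π(g)`
    (L Lpi : Mor V → (Y →L[ℂ] Y))
    (hL : ∀ (g f : Mor V) (ξ : X),
      L g (te f ξ) = if h : f.tgt = g.src then te (g.comp f h) ξ else 0)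
    (hLpi : ∀ (g f : Mor V) (ξ : X),
      Lpi g (te f ξ) = if h : f.tgt = g.src then te (g.comp f h) (π g ξ) else 0) :
    (W ∘L Wstar ∘L W = W) ∧ ∀ g : Mor V, W ∘L L g ∘L Wstar = Lpi g :=
  statement5_general innX π hπmul hπadj innY hYadd hYsmul hYstar hYdef hYcont te hte hdense W Wstar
    hW hWadj L Lpi hL hLpi
end

section
/- Let (G', P') be a quasi-lattice ordered group acting on a set X, and let G be the transformation groupoid with objects X and morphisms G(x,y) = {g ∈ G' : g·x = y}. Let P be the wide subcategory with P(x,y) = {g ∈ P' : g·x = y}. Then (G, P) is a quasi-lattice ordered groupoid. -/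
open CategoryTheory

universe v u w

/-- A wide subcategory of a groupoid. -/
structure WideSub (V : Type v) [Groupoid V] where
  mem : ∀ ⦃x y : V⦄, (x ⟶ y) → Prop
  id_mem : ∀ x : V, mem (𝟙 x)
  comp_mem : ∀ ⦃x y z : V⦄ (f : x ⟶ y) (g : y ⟶ z), mem f → mem g → mem (f ≫ g)

/-- `f ≤ g` iff `f⁻¹g ∈ P(-,-)`. -/
def WideSub.le {V : Type v} [Groupoid V] (P : WideSub V) (f g : Mor V) : Prop :=
  ∃ h : f.tgt = g.tgt, P.mem (g.hom ≫ eqToHom h.symm ≫ Groupoid.inv f.hom)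

/-- `g` is an upper bound in `P` for the set `S` of morphisms. -/
def WideSub.IsUB {V : Type v} [Groupoid V] (P : WideSub V) (S : Set (Mor V))
    (g : Mor V) : Prop :=
  P.mem g.hom ∧ ∀ f ∈ S, P.le f g

/-- `(G, P)` is a quasi-lattice ordered groupoid: `P(x,y) ∩ P⁻¹(x,y)` is empty
for `x ≠ y` and `{1_x}` for `x = y`, and every (nonempty) finite set of
morphisms of `G` with an upper bound in `P` has a least upper bound in `P`. -/
def WideSub.IsQuasiLatticeOrdered {V : Type v} [Groupoid V] (P : WideSub V) : Prop :=
  (∀ ⦃x y : V⦄ (f : x ⟶ y), P.mem f → P.mem (Groupoid.inv f) →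
      ∃ h : x = y, f = eqToHom h) ∧
  ∀ S : Set (Mor V), S.Finite → S.Nonempty → (∃ g, P.IsUB S g) →
    ∃ g, P.IsUB S g ∧ ∀ g', P.IsUB S g' → P.le g g'

/-- Objects of the transformation groupoid of the action of `G'` on `X`. -/
structure TOb (G' : Type u) (X : Type w) where
  pt : X

variable {G' : Type u} [Group G'] {X : Type w} [MulAction G' X]

/-- The transformation groupoid: morphisms from `x` to `y` are group elements
`g` with `g • x = y`. -/
instance : Groupoid (TOb G' X) where
  Hom x y := {g : G' // g • x.pt = y.pt}
  id x := ⟨1, one_smul G' x.pt⟩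
  comp f g := ⟨g.val * f.val, by rw [mul_smul, f.prop, g.prop]⟩
  id_comp f := Subtype.ext (by simp)
  comp_id f := Subtype.ext (by simp)
  assoc f g h := Subtype.ext (mul_assoc _ _ _).symm
  inv f := ⟨f.val⁻¹, inv_smul_eq_iff.mpr f.prop.symm⟩
  inv_comp f := Subtype.ext (by simp)
  comp_inv f := Subtype.ext (by simp)

/-- The wide subcategory `P` with `P(x,y) = {g ∈ P' : g • x = y}`. -/
def transWide (P' : Submonoid G') : WideSub (TOb G' X) where
  mem {x y} f := f.val ∈ P'
  id_mem x := one_mem P'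
  comp_mem {x y z} f g hf hg := mul_mem hg hf

/-!
All morphisms below a common upper bound share its target `y`, and among morphisms ending at `y`
the order `f ≤ g` of the groupoid is the order `f⁻¹ g ∈ P'` of their labels in `G'`. So the least
upper bound of the labels in `(G', P')`, read as a morphism ending at `y`, is the least upper bound
in `(G, P)`; and a morphism in `P ∩ P⁻¹` is labelled by `1`, hence is an identity.
-/

namespace TOb

@[simp]
lemma comp_val {x y z : TOb G' X} (f : x ⟶ y) (g : y ⟶ z) : (f ≫ g).val = g.val * f.val :=
  rfl

@[simp]
lemma inv_val {x y : TOb G' X} (f : x ⟶ y) : (Groupoid.inv f).val = f.val⁻¹ :=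
  rfl

@[simp]
lemma eqToHom_val {x y : TOb G' X} (h : x = y) : (eqToHom h).val = 1 := by
  subst h
  rfl

lemma exists_eq_eqToHom_of_val_eq_one {x y : TOb G' X} (f : x ⟶ y) (hf : f.val = 1) :
    ∃ h : x = y, f = eqToHom h := by
  obtain rfl : x = y := by
    cases x; cases y
    simpa [hf] using f.prop
  exact ⟨rfl, Subtype.ext hf⟩

def morTo (y : TOb G' X) (g : G') : Mor (TOb G' X) :=
  ⟨⟨g⁻¹ • y.pt⟩, y, ⟨g, smul_inv_smul g y.pt⟩⟩

end TOb

section TransWide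

variable (P' : Submonoid G')

lemma transWide_le_iff (f g : Mor (TOb G' X)) :
    (transWide P').le f g ↔ f.tgt = g.tgt ∧ f.hom.val⁻¹ * g.hom.val ∈ P' := by
  simp only [WideSub.le, transWide, TOb.comp_val, TOb.inv_val, TOb.eqToHom_val, mul_one,
    exists_prop]

lemma transWide_isUB_iff {S : Set (Mor (TOb G' X))} {y : TOb G' X} (hS : S.Nonempty)
    (htgt : ∀ f ∈ S, f.tgt = y) (g : Mor (TOb G' X)) :
    (transWide P').IsUB S g ↔
      g.tgt = y ∧ g.hom.val ∈ P' ∧ ∀ a ∈ (fun f ↦ f.hom.val) '' S, a⁻¹ * g.hom.val ∈ P' := by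
  obtain ⟨f₀, hf₀⟩ := hS
  simp only [WideSub.IsUB, transWide_le_iff, Set.forall_mem_image]
  constructor
  · rintro ⟨hg, hle⟩
    exact ⟨(hle f₀ hf₀).1.symm.trans (htgt f₀ hf₀), hg, fun f hf ↦ (hle f hf).2⟩
  · rintro ⟨rfl, hg, hle⟩
    exact ⟨hg, fun f hf ↦ ⟨htgt f hf, hle hf⟩⟩

end TransWide

/-- for a quasi-lattice ordered group `(G', P')` acting on a set
`X`, the transformation groupoid `G` with the wide subcategory
`P(x,y) = {g ∈ P' : g • x = y}` is a quasi-lattice ordered groupoid. -/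
theorem statement8 (P' : Submonoid G')
    (hP : ∀ a ∈ P', a⁻¹ ∈ P' → a = 1)
    (hql : ∀ A : Set G', A.Finite →
      (∃ u ∈ P', ∀ a ∈ A, a⁻¹ * u ∈ P') →
      ∃ u ∈ P', (∀ a ∈ A, a⁻¹ * u ∈ P') ∧
        ∀ v ∈ P', (∀ a ∈ A, a⁻¹ * v ∈ P') → u⁻¹ * v ∈ P') :
    (transWide P' : WideSub (TOb G' X)).IsQuasiLatticeOrdered := by
  refine ⟨fun x y f hf hinv ↦ TOb.exists_eq_eqToHom_of_val_eq_one f (hP _ hf hinv), ?_⟩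
  rintro S hSfin hSne ⟨g₀, hg₀⟩
  have htgt : ∀ f ∈ S, f.tgt = g₀.tgt := fun f hf ↦ ((transWide_le_iff P' f g₀).1 (hg₀.2 f hf)).1
  have hub := transWide_isUB_iff P' hSne htgt
  obtain ⟨-, hg₀P, hg₀A⟩ := (hub g₀).1 hg₀
  obtain ⟨u, huP, huA, hu_least⟩ := hql _ (hSfin.image _) ⟨_, hg₀P, hg₀A⟩
  refine ⟨TOb.morTo g₀.tgt u, (hub _).2 ⟨rfl, huP, huA⟩, fun g hg ↦ ?_⟩
  obtain ⟨hg_tgt, hgP, hgA⟩ := (hub g).1 hg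
  exact (transWide_le_iff P' _ _).2 ⟨hg_tgt.symm, hu_least _ hgP hgA⟩
end

section
/- Let B be a C*-algebra with closed linear subspaces {B_g}_{g ∈ G(-,-)} indexed by the morphisms of a discrete groupoid G satisfying: B_f B_g ⊆ B_{fg} when s(f) = t(g) and B_f B_g = 0 otherwise, B_g* = B_{g⁻¹}, and Σ_g B_g dense in B. If there is a bounded linear map F : B → span-closure{B_{1_x} : x ∈ ob(G)} restricting to the identity on that subspace and vanishing on B_g for every non-identity g, then F is a conditional expectation and the subspaces {B_g} are linearly independent (so they form a G-grading of B). -/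
/-! Evaluating `F` on products `b_g* b_h` of homogeneous elements gives `δ_{g,h} b_g* b_g`, since
`b_g* b_h ∈ B_{g⁻¹h}` and `g⁻¹h` is an identity only when `g = h`. Hence `F(c* c)` is a sum of
positive elements for every `c` in the dense span of the fibres, so `F` is positive; and
`F(b_g* ∑ b_h) = b_g* b_g` shows that a vanishing finite sum has vanishing terms. Checking on
fibres, `F` commutes with `*` and is a bimodule map over `diag`, so the Kadison–Schwarz argument
gives `F(b)* F(b) ≤ F(b* b)`; with the C*-identity this yields `‖F‖² ≤ ‖F‖`. -/

open CategoryTheory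

universe v u

namespace Mor

variable {V : Type v} [Groupoid V]

/-- `f` is an identity morphism. -/
def IsId (f : Mor V) : Prop := ∃ x : V, f = Mor.id x

end Mor

namespace Mor

variable {V : Type v} [Groupoid V]

theorem mk_congr {x y : V} {f g : x ⟶ y} (h : f = g) : (⟨x, y, f⟩ : Mor V) = ⟨x, y, g⟩ :=
  h ▸ rfl

theorem id_comp (x : V) (g : Mor V) (h : g.tgt = x) : (Mor.id x).comp g h = g := by
  obtain ⟨s, t, g⟩ := g
  cases h
  exact mk_congr (show g ≫ eqToHom rfl ≫ 𝟙 t = g by simp)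

theorem comp_id_s14 (x : V) (g : Mor V) (h : x = g.src) : g.comp (Mor.id x) h = g := by
  obtain ⟨s, t, g⟩ := g
  cases h
  exact mk_congr (by simp [id, src, tgt, hom])

theorem inv_id (x : V) : (Mor.id x).inv = Mor.id x :=
  mk_congr (by simp [id, src, tgt, hom])

theorem inv_inv (f : Mor V) : f.inv.inv = f := by
  obtain ⟨s, t, f⟩ := f
  exact mk_congr (by simp [inv, src, tgt, hom])

theorem IsId.of_inv {f : Mor V} (h : f.inv.IsId) : f.IsId := by
  obtain ⟨x, hx⟩ := h
  exact ⟨x, by rw [← inv_inv f, hx, inv_id]⟩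

theorem inv_comp_self_s14 (g : Mor V) : g.inv.comp g rfl = Mor.id g.src := by
  obtain ⟨s, t, g⟩ := g
  exact mk_congr (show g ≫ eqToHom rfl ≫ Groupoid.inv g = 𝟙 s by simp)

theorem not_isId_inv_comp {g h : Mor V} (hgh : h.tgt = g.tgt) (hne : g ≠ h) :
    ¬ (g.inv.comp h hgh).IsId := by
  obtain ⟨gs, gt, g⟩ := g
  obtain ⟨hs, ht, h⟩ := h
  dsimp only [tgt] at hgh
  subst hgh
  rintro ⟨x, hx⟩
  change (⟨hs, gs, h ≫ eqToHom rfl ≫ Groupoid.inv g⟩ : Σ (x : V) (y : V), x ⟶ y) =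
    ⟨x, x, 𝟙 x⟩ at hx
  obtain ⟨rfl, hx⟩ := Sigma.mk.inj_iff.mp hx
  obtain ⟨rfl, hx⟩ := Sigma.mk.inj_iff.mp (eq_of_heq hx)
  refine hne (mk_congr ?_)
  simpa [comp_inv_eq_id] using (eq_of_heq hx).symm

end Mor

variable {V : Type v} [Groupoid V] {B : Type u}

/-- The closed span of the unit fibers of a family of subspaces indexed by the
morphisms of a groupoid. -/
def diag [NonUnitalCStarAlgebra B] (Bg : Mor V → Submodule ℂ B) : Set B :=
  closure (↑(Submodule.span ℂ (⋃ x : V, (Bg (Mor.id x) : Set B))) : Set B)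

section KadisonSchwarz

variable {A G : Type*} [NonUnitalRing A] [StarRing A] [PartialOrder A] [StarOrderedRing A]
  [FunLike G A A] [AddMonoidHomClass G A A]

theorem star_apply_mul_apply_le (F : G) (hpos : ∀ c, 0 ≤ F (star c * c))
    (hstar : ∀ b, F (star b) = star (F b)) (hidem : ∀ b, F (F b) = F b)
    (hleft : ∀ a b, F (F a * b) = F a * F b) (hright : ∀ a b, F (b * F a) = F b * F a)
    (b : A) : star (F b) * F b ≤ F (star b * b) := by
  have h₁ : F (star (F b) * F b) = star (F b) * F b := by rw [← hstar, hleft, hidem]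
  have h₂ : F (star (F b) * b) = star (F b) * F b := by rw [← hstar, hleft]
  have h₃ : F (star b * F b) = star (F b) * F b := by rw [hright, hstar]
  have h := hpos (F b - b)
  rw [star_sub, sub_mul, mul_sub, mul_sub, map_sub, map_sub, map_sub, h₁, h₂, h₃] at h
  rw [← sub_nonneg]
  convert h using 1
  abel

end KadisonSchwarz

theorem ContinuousLinearMap.opNorm_le_one_of_star_mul_self_le {A : Type*}
    [NonUnitalCStarAlgebra A] [PartialOrder A] [StarOrderedRing A] (F : A →L[ℂ] A)
    (h : ∀ b, star (F b) * F b ≤ F (star b * b)) : ‖F‖ ≤ 1 := by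
  have hb (b : A) : ‖F b‖ ≤ √‖F‖ * ‖b‖ := by
    refine le_of_sq_le_sq ?_ (by positivity)
    calc ‖F b‖ ^ 2 = ‖star (F b) * F b‖ := by rw [CStarRing.norm_star_mul_self, sq]
      _ ≤ ‖F (star b * b)‖ := CStarAlgebra.norm_le_norm_of_nonneg_of_le (hab := h b)
      _ ≤ ‖F‖ * ‖star b * b‖ := F.le_opNorm _
      _ = (√‖F‖ * ‖b‖) ^ 2 := by
        rw [CStarRing.norm_star_mul_self, mul_pow, Real.sq_sqrt (norm_nonneg F), sq ‖b‖]
  have hF : ‖F‖ ≤ √‖F‖ := F.opNorm_le_bound (by positivity) hb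
  rw [Real.le_sqrt (norm_nonneg F) (norm_nonneg F)] at hF
  nlinarith [norm_nonneg F]

namespace GroupoidGrading

section Algebraic

variable [NonUnitalNonAssocSemiring B] [Module ℂ B] {Bg : Mor V → Submodule ℂ B}
  (hmul : ∀ (f g : Mor V) (h : g.tgt = f.src) ⦃a b : B⦄,
    a ∈ Bg f → b ∈ Bg g → a * b ∈ Bg (f.comp g h))
  (hzero : ∀ f g : Mor V, g.tgt ≠ f.src → ∀ ⦃a b : B⦄, a ∈ Bg f → b ∈ Bg g → a * b = 0)

include hmul hzero

theorem mul_mem_of_mem_id_left {x : V} {g : Mor V} {a b : B} (ha : a ∈ Bg (Mor.id x))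
    (hb : b ∈ Bg g) : a * b ∈ Bg g := by
  by_cases hgx : g.tgt = x
  · simpa only [Mor.id_comp] using hmul (Mor.id x) g hgx ha hb
  · simpa only [hzero (Mor.id x) g hgx ha hb] using zero_mem (Bg g)

theorem mul_mem_of_mem_id_right {x : V} {g : Mor V} {a b : B} (ha : a ∈ Bg (Mor.id x))
    (hb : b ∈ Bg g) : b * a ∈ Bg g := by
  by_cases hgx : x = g.src
  · simpa only [Mor.comp_id_s14] using hmul g (Mor.id x) hgx hb ha
  · simpa only [hzero g (Mor.id x) hgx hb ha] using zero_mem (Bg g)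

end Algebraic

variable [NonUnitalCStarAlgebra B] {Bg : Mor V → Submodule ℂ B} {F : B →L[ℂ] B}
  (hmul : ∀ (f g : Mor V) (h : g.tgt = f.src) ⦃a b : B⦄,
    a ∈ Bg f → b ∈ Bg g → a * b ∈ Bg (f.comp g h))
  (hzero : ∀ f g : Mor V, g.tgt ≠ f.src → ∀ ⦃a b : B⦄, a ∈ Bg f → b ∈ Bg g → a * b = 0)
  (hstar : ∀ (f : Mor V) ⦃a : B⦄, a ∈ Bg f → star a ∈ Bg f.inv)
  (hdense : Dense (↑(Submodule.span ℂ (⋃ f : Mor V, (Bg f : Set B))) : Set B))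
  (hF1 : ∀ x, ∀ b ∈ Bg (Mor.id x), F b = b)
  (hF0 : ∀ f : Mor V, ¬ f.IsId → ∀ b ∈ Bg f, F b = 0)

include hF1 hF0 in
theorem exists_apply_eq_smul (g : Mor V) : ∃ c : ℂ, ∀ b ∈ Bg g, F b = c • b := by
  by_cases hg : g.IsId
  · obtain ⟨x, rfl⟩ := hg
    exact ⟨1, fun b hb => by rw [hF1 x b hb, one_smul]⟩
  · exact ⟨0, fun b hb => by rw [hF0 g hg b hb, zero_smul]⟩

include hmul hzero hdense hF1 hF0 in
theorem apply_mul_of_mem_id_left {x : V} {a : B} (ha : a ∈ Bg (Mor.id x)) (b : B) :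
    F (a * b) = a * F b := by
  suffices F.comp (.mul ℂ B a) = (ContinuousLinearMap.mul ℂ B a).comp F from
    DFunLike.congr_fun this b
  refine ContinuousLinearMap.ext_on hdense ?_
  rintro b ⟨_, ⟨g, rfl⟩, hb⟩
  obtain ⟨c, hc⟩ := exists_apply_eq_smul hF1 hF0 g
  simp [hc b hb, hc _ (mul_mem_of_mem_id_left hmul hzero ha hb)]

include hmul hzero hdense hF1 hF0 in
theorem apply_mul_of_mem_id_right {x : V} {a : B} (ha : a ∈ Bg (Mor.id x)) (b : B) :
    F (b * a) = F b * a := by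
  suffices F.comp ((ContinuousLinearMap.mul ℂ B).flip a) =
      ((ContinuousLinearMap.mul ℂ B).flip a).comp F from DFunLike.congr_fun this b
  refine ContinuousLinearMap.ext_on hdense ?_
  rintro b ⟨_, ⟨g, rfl⟩, hb⟩
  obtain ⟨c, hc⟩ := exists_apply_eq_smul hF1 hF0 g
  simp [hc b hb, hc _ (mul_mem_of_mem_id_right hmul hzero ha hb)]

include hmul hzero hdense hF1 hF0 in
theorem apply_mul_of_mem_diag_left {a : B} (ha : a ∈ diag Bg) (b : B) :
    F (a * b) = a * F b := by
  have := ContinuousLinearMap.eqOn_closure_span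
    (f := F.comp ((ContinuousLinearMap.mul ℂ B).flip b))
    (g := (ContinuousLinearMap.mul ℂ B).flip (F b)) ?_ ha
  · simpa using this
  rintro a ⟨_, ⟨x, rfl⟩, ha⟩
  simpa using apply_mul_of_mem_id_left hmul hzero hdense hF1 hF0 ha b

include hmul hzero hdense hF1 hF0 in
theorem apply_mul_of_mem_diag_right {a : B} (ha : a ∈ diag Bg) (b : B) :
    F (b * a) = F b * a := by
  have := ContinuousLinearMap.eqOn_closure_span
    (f := F.comp (ContinuousLinearMap.mul ℂ B b))
    (g := ContinuousLinearMap.mul ℂ B (F b)) ?_ ha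
  · simpa using this
  rintro a ⟨_, ⟨x, rfl⟩, ha⟩
  simpa using apply_mul_of_mem_id_right hmul hzero hdense hF1 hF0 ha b

include hstar hdense hF1 hF0 in
theorem apply_star (b : B) : F (star b) = star (F b) := by
  let σ : B →L⋆[ℂ] B := (starL ℂ : B ≃L⋆[ℂ] B).toContinuousLinearMap
  suffices σ.comp (F.comp σ) = F by simpa [σ] using congr(star ($this b))
  refine ContinuousLinearMap.ext_on hdense ?_
  rintro b ⟨_, ⟨g, rfl⟩, hb⟩
  by_cases hg : g.IsId
  · obtain ⟨x, rfl⟩ := hg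
    have hb' : star b ∈ Bg (Mor.id x) := Mor.inv_id x ▸ hstar _ hb
    simp [σ, hF1 x _ hb', hF1 x b hb]
  · have hg' : ¬ g.inv.IsId := fun h => hg h.of_inv
    simp [σ, hF0 g.inv hg' _ (hstar g hb), hF0 g hg b hb]

include hmul hzero hstar hF0 in
theorem apply_star_mul_of_ne {g h : Mor V} {x y : B} (hx : x ∈ Bg g) (hy : y ∈ Bg h)
    (hgh : g ≠ h) : F (star x * y) = 0 := by
  by_cases ht : h.tgt = g.tgt
  · exact hF0 _ (Mor.not_isId_inv_comp ht hgh) _ (hmul g.inv h ht (hstar g hx) hy)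
  · rw [hzero g.inv h ht (hstar g hx) hy, map_zero]

include hmul hstar hF1 in
theorem apply_star_mul_self {g : Mor V} {x : B} (hx : x ∈ Bg g) :
    F (star x * x) = star x * x := by
  have h := hmul g.inv g rfl (hstar g hx) hx
  rw [Mor.inv_comp_self_s14] at h
  exact hF1 _ _ h

include hmul hzero hstar hF1 hF0 in
theorem apply_star_mul_sum {s : Finset (Mor V)} {b : Mor V → B} (hb : ∀ f ∈ s, b f ∈ Bg f)
    {g : Mor V} (hg : g ∈ s) : F (star (b g) * ∑ h ∈ s, b h) = star (b g) * b g := by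
  rw [Finset.mul_sum, map_sum, Finset.sum_eq_single_of_mem g hg]
  · exact apply_star_mul_self hmul hstar hF1 (hb g hg)
  · intro h hh hhg
    exact apply_star_mul_of_ne hmul hzero hstar hF0 (hb g hg) (hb h hh) (Ne.symm hhg)

include hmul hzero hstar hdense hF1 hF0 in
theorem apply_star_mul_self_nonneg [PartialOrder B] [StarOrderedRing B] (c : B) :
    0 ≤ F (star c * c) := by
  refine hdense.induction (fun c hc => ?_)
    (CStarAlgebra.isClosed_nonneg.preimage (by fun_prop)) c
  rw [SetLike.mem_coe, ← Submodule.iSup_eq_span, Submodule.mem_iSup_iff_exists_finsupp] at hc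
  obtain ⟨d, hd, rfl⟩ := hc
  have hsum : F (star (d.sum fun _ x => x) * d.sum fun _ x => x) =
      ∑ g ∈ d.support, star (d g) * d g := by
    rw [Finsupp.sum, star_sum, Finset.sum_mul, map_sum]
    exact Finset.sum_congr rfl fun g hg =>
      apply_star_mul_sum hmul hzero hstar hF1 hF0 (fun f _ => hd f) hg
  rw [hsum]
  exact Finset.sum_nonneg fun g _ => star_mul_self_nonneg (d g)

include hmul hzero hstar hF1 hF0 in
theorem eq_zero_of_sum_eq_zero {s : Finset (Mor V)} {b : Mor V → B} (hb : ∀ f, b f ∈ Bg f)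
    (hsum : ∑ f ∈ s, b f = 0) {g : Mor V} (hg : g ∈ s) : b g = 0 := by
  have h := apply_star_mul_sum hmul hzero hstar hF1 hF0 (fun f _ => hb f) hg
  rw [hsum, mul_zero, map_zero] at h
  exact (CStarRing.star_mul_self_eq_zero_iff _).mp h.symm

end GroupoidGrading

open GroupoidGrading in
theorem statement14_general [NonUnitalCStarAlgebra B] [PartialOrder B] [StarOrderedRing B]
    (Bg : Mor V → Submodule ℂ B)
    (hmul : ∀ (f g : Mor V) (h : g.tgt = f.src) ⦃a b : B⦄,
      a ∈ Bg f → b ∈ Bg g → a * b ∈ Bg (f.comp g h))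
    (hzero : ∀ f g : Mor V, g.tgt ≠ f.src →
      ∀ ⦃a b : B⦄, a ∈ Bg f → b ∈ Bg g → a * b = 0)
    (hstar : ∀ (f : Mor V) ⦃a : B⦄, a ∈ Bg f → star a ∈ Bg f.inv)
    (hdense : Dense (↑(Submodule.span ℂ (⋃ f : Mor V, (Bg f : Set B))) : Set B))
    (F : B →L[ℂ] B)
    (hFrange : ∀ b : B, F b ∈ diag Bg)
    (hFid : ∀ b ∈ diag Bg, F b = b)
    (hF0 : ∀ f : Mor V, ¬ f.IsId → ∀ b ∈ Bg f, F b = 0) :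
    (‖F‖ ≤ 1) ∧
    (∀ b : B, 0 ≤ b → 0 ≤ F b) ∧
    (∀ b : B, F (F b) = F b) ∧
    (∀ a b : B, a ∈ diag Bg → F (a * b) = a * F b ∧ F (b * a) = F b * a) ∧
    (∀ (s : Finset (Mor V)) (b : Mor V → B), (∀ f, b f ∈ Bg f) →
      (∑ f ∈ s, b f) = 0 → ∀ f ∈ s, b f = 0) := by
  have hF1 (x : V) (b : B) (hb : b ∈ Bg (Mor.id x)) : F b = b :=
    hFid b (subset_closure (Submodule.subset_span (Set.mem_iUnion_of_mem x hb)))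
  have hidem (b : B) : F (F b) = F b := hFid _ (hFrange b)
  have hpos := apply_star_mul_self_nonneg hmul hzero hstar hdense hF1 hF0
  have hleft (a b : B) (ha : a ∈ diag Bg) : F (a * b) = a * F b :=
    apply_mul_of_mem_diag_left hmul hzero hdense hF1 hF0 ha b
  have hright (a b : B) (ha : a ∈ diag Bg) : F (b * a) = F b * a :=
    apply_mul_of_mem_diag_right hmul hzero hdense hF1 hF0 ha b
  refine ⟨?_, fun b hb => ?_, hidem, fun a b ha => ⟨hleft a b ha, hright a b ha⟩,
    fun s b hb hsum g hg => eq_zero_of_sum_eq_zero hmul hzero hstar hF1 hF0 hb hsum hg⟩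
  · exact F.opNorm_le_one_of_star_mul_self_le <|
      star_apply_mul_apply_le F hpos (apply_star hstar hdense hF1 hF0) hidem
        (fun a b => hleft _ b (hFrange a)) (fun a b => hright _ b (hFrange a))
  · obtain ⟨c, rfl⟩ := CStarAlgebra.nonneg_iff_eq_star_mul_self.mp hb
    exact hpos c

/-- let `B` be a C*-algebra with closed subspaces `{B_g}` indexed
by the morphisms of a discrete groupoid satisfying `B_f B_g ⊆ B_{fg}` for
composable pairs, `B_f B_g = 0` otherwise, `B_g* = B_{g⁻¹}`, and with `Σ_g B_g`
dense.  If `F : B → closure span{B_{1_x}}` is a bounded linear map restricting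
to the identity there and vanishing on all `B_g` with `g` not an identity, then
`F` is a conditional expectation (contractive, positive, idempotent, bimodule
map over the diagonal) and the subspaces `{B_g}` are linearly independent,
i.e. they form a topological `G`-grading of `B`. -/
theorem statement14 [NonUnitalCStarAlgebra B] [PartialOrder B] [StarOrderedRing B]
    (Bg : Mor V → Submodule ℂ B)
    (hclosed : ∀ f, IsClosed (Bg f : Set B))
    (hmul : ∀ (f g : Mor V) (h : g.tgt = f.src) ⦃a b : B⦄,
      a ∈ Bg f → b ∈ Bg g → a * b ∈ Bg (f.comp g h))
    (hzero : ∀ f g : Mor V, g.tgt ≠ f.src →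
      ∀ ⦃a b : B⦄, a ∈ Bg f → b ∈ Bg g → a * b = 0)
    (hstar : ∀ (f : Mor V) ⦃a : B⦄, a ∈ Bg f → star a ∈ Bg f.inv)
    (hdense : Dense (↑(Submodule.span ℂ (⋃ f : Mor V, (Bg f : Set B))) : Set B))
    (F : B →L[ℂ] B)
    (hFrange : ∀ b : B, F b ∈ diag Bg)
    (hFid : ∀ b ∈ diag Bg, F b = b)
    (hF0 : ∀ f : Mor V, ¬ f.IsId → ∀ b ∈ Bg f, F b = 0) :
    (‖F‖ ≤ 1) ∧
    (∀ b : B, 0 ≤ b → 0 ≤ F b) ∧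
    (∀ b : B, F (F b) = F b) ∧
    (∀ a b : B, a ∈ diag Bg → F (a * b) = a * F b ∧ F (b * a) = F b * a) ∧
    (∀ (s : Finset (Mor V)) (b : Mor V → B), (∀ f, b f ∈ Bg f) →
      (∑ f ∈ s, b f) = 0 → ∀ f ∈ s, b f = 0) :=
  statement14_general Bg hmul hzero hstar hdense F hFrange hFid hF0
end

section
/- Let B be a topologically G-graded C*-algebra whose conditional expectation F onto the closed span of the unit fibers is faithful. Then the canonical surjective *-homomorphism λ_B : B → C*_r(Fb) onto the reduced cross sectional algebra of the associated Fell bundle Fb = {B_g} (sending b_g ∈ B_g to Λ(b_g)) is injective, hence a *-isomorphism. -/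
/-!
The unit fibres `B_x` are mutually orthogonal, and the norm of a finite orthogonal sum is the
largest norm of a summand; as `λ_B` is isometric on each fibre, it is isometric on the closed span
of the unit fibres, which contains the range of `F`. If `λ_B b = 0`, then
`λ_B (F (b⋆b)) = E (λ_B (b⋆b)) = 0`, so `F (b⋆b) = 0` and `b = 0` by faithfulness. Being an
injective *-homomorphism of C⋆-algebras, `λ_B` is isometric, so its range is closed; it contains
the dense image of the fibres, hence is everything.
-/

open CategoryTheory

universe v u u₁

variable {V : Type v} [Groupoid V] {B : Type u}

open Function Submodule
open scoped CStarAlgebra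

lemma sum_mul_sum_of_pairwise_mul_eq_zero {ι R : Type*} [NonUnitalNonAssocSemiring R]
    (s : Finset ι) (f g : ι → R) (h : Pairwise fun i j => f i * g j = 0) :
    (∑ i ∈ s, f i) * ∑ j ∈ s, g j = ∑ i ∈ s, f i * g i := by
  rw [Finset.sum_mul_sum]
  exact Finset.sum_congr rfl fun i hi =>
    Finset.sum_eq_single_of_mem i hi fun j _ hji => h hji.symm

section OrthogonalFamily

variable {A : Type*} [NonUnitalCStarAlgebra A] {ι : Type*}

lemma norm_le_norm_sum_of_pairwise_star_mul_eq_zero (s : Finset ι) (a : ι → A)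
    (h : Pairwise fun i j => star (a i) * a j = 0) {i : ι} (hi : i ∈ s) :
    ‖a i‖ ≤ ‖∑ j ∈ s, a j‖ := by
  have hmul : star (a i) * ∑ j ∈ s, a j = star (a i) * a i := by
    rw [Finset.mul_sum]
    exact Finset.sum_eq_single_of_mem i hi fun j _ hji => h hji.symm
  rcases (norm_nonneg (a i)).eq_or_lt with h0 | hpos
  · rw [← h0]
    exact norm_nonneg _
  refine le_of_mul_le_mul_left ?_ hpos
  calc ‖a i‖ * ‖a i‖ = ‖star (a i) * ∑ j ∈ s, a j‖ := by rw [hmul, CStarRing.norm_star_mul_self]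
    _ ≤ ‖a i‖ * ‖∑ j ∈ s, a j‖ := by simpa using norm_mul_le (star (a i)) (∑ j ∈ s, a j)

variable [PartialOrder A] [StarOrderedRing A]

lemma norm_le_of_nonneg_of_mul_self_le_smul {t : A} (ht : 0 ≤ t) {c : ℝ} (hc : 0 ≤ c)
    (h : t * t ≤ c • t) : ‖t‖ ≤ c := by
  have hstar : star t = t := (IsSelfAdjoint.of_nonneg ht).star_eq
  have htt : 0 ≤ t * t := by simpa [hstar] using star_mul_self_nonneg t
  rcases (norm_nonneg t).eq_or_lt with h0 | hpos
  · rw [← h0]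
    exact hc
  refine le_of_mul_le_mul_right ?_ hpos
  calc ‖t‖ * ‖t‖ = ‖t * t‖ := by rw [← CStarRing.norm_star_mul_self, hstar]
    _ ≤ ‖c • t‖ := CStarAlgebra.norm_le_norm_of_nonneg_of_le htt h
    _ = c * ‖t‖ := by rw [norm_smul, Real.norm_of_nonneg hc]

lemma norm_sum_le_of_pairwise_orthogonal (s : Finset ι) (a : ι → A)
    (h₁ : Pairwise fun i j => star (a i) * a j = 0)
    (h₂ : Pairwise fun i j => a i * star (a j) = 0)
    {M : ℝ} (hM : 0 ≤ M) (ha : ∀ i ∈ s, ‖a i‖ ≤ M) : ‖∑ i ∈ s, a i‖ ≤ M := by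
  set t := ∑ i ∈ s, star (a i) * a i
  have ht : star (∑ i ∈ s, a i) * ∑ i ∈ s, a i = t := by
    rw [star_sum]
    exact sum_mul_sum_of_pairwise_mul_eq_zero s _ _ h₁
  have htt : t * t = ∑ i ∈ s, star (a i) * (a i * star (a i)) * a i := by
    rw [sum_mul_sum_of_pairwise_mul_eq_zero s _ _ fun i j hij => by
      dsimp only
      rw [mul_assoc, ← mul_assoc (a i), h₂ hij, zero_mul, mul_zero]]
    simp only [mul_assoc]
  have hle : t * t ≤ M ^ 2 • t := by
    rw [htt, Finset.smul_sum]
    refine Finset.sum_le_sum fun i hi => ?_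
    calc star (a i) * (a i * star (a i)) * a i
        ≤ ‖a i * star (a i)‖ • (star (a i) * a i) :=
          CStarAlgebra.star_left_conjugate_le_norm_smul (.mul_star_self _)
      _ ≤ M ^ 2 • (star (a i) * a i) := by
          refine smul_le_smul_of_nonneg_right ?_ (star_mul_self_nonneg _)
          rw [CStarRing.norm_self_mul_star, ← sq]
          exact pow_le_pow_left₀ (norm_nonneg _) (ha i hi) 2
  have hsq := norm_le_of_nonneg_of_mul_self_le_smul (star_mul_self_nonneg _) (sq_nonneg M)
    (ht ▸ hle)
  rw [CStarRing.norm_star_mul_self, ← sq] at hsq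
  exact (pow_le_pow_iff_left₀ (norm_nonneg _) hM two_ne_zero).mp hsq

variable {R : Type*} [NonUnitalCStarAlgebra R]

lemma NonUnitalStarAlgHom.norm_map_sum_of_pairwise_orthogonal (φ : A →⋆ₙₐ[ℂ] R)
    (s : Finset ι) (a : ι → A)
    (h₁ : Pairwise fun i j => star (a i) * a j = 0)
    (h₂ : Pairwise fun i j => a i * star (a j) = 0)
    (hφ : ∀ i ∈ s, ‖φ (a i)‖ = ‖a i‖) : ‖φ (∑ i ∈ s, a i)‖ = ‖∑ i ∈ s, a i‖ := by
  refine le_antisymm (NonUnitalStarAlgHom.norm_apply_le φ _) ?_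
  have h₁' : Pairwise fun i j => star (φ (a i)) * φ (a j) = 0 := fun i j hij => by
    dsimp only
    rw [← map_star, ← map_mul, h₁ hij, map_zero]
  rw [map_sum]
  exact norm_sum_le_of_pairwise_orthogonal s a h₁ h₂ (norm_nonneg _) fun i hi =>
    (hφ i hi).ge.trans (norm_le_norm_sum_of_pairwise_star_mul_eq_zero s _ h₁' hi)

lemma NonUnitalStarAlgHom.norm_map_of_mem_closure_span_iUnion (φ : A →⋆ₙₐ[ℂ] R)
    (W : ι → Submodule ℂ A)
    (h₁ : Pairwise fun i j => ∀ a ∈ W i, ∀ b ∈ W j, star a * b = 0)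
    (h₂ : Pairwise fun i j => ∀ a ∈ W i, ∀ b ∈ W j, a * star b = 0)
    (hφ : ∀ i, ∀ a ∈ W i, ‖φ a‖ = ‖a‖) {a : A}
    (ha : a ∈ closure (span ℂ (⋃ i, (W i : Set A)) : Set A)) : ‖φ a‖ = ‖a‖ := by
  refine Set.EqOn.closure (f := fun a => ‖φ a‖) (g := norm) (fun a ha => ?_)
    (map_continuous φ).norm continuous_norm ha
  rw [SetLike.mem_coe, span_iUnion] at ha
  simp only [span_eq] at ha
  obtain ⟨f, hf, rfl⟩ := (mem_iSup_iff_exists_finsupp W a).mp ha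
  exact φ.norm_map_sum_of_pairwise_orthogonal f.support f
    (fun i j hij => h₁ hij _ (hf i) _ (hf j)) (fun i j hij => h₂ hij _ (hf i) _ (hf j))
    fun i _ => hφ i _ (hf i)

end OrthogonalFamily

section Hom

variable {A R : Type*} [NonUnitalCStarAlgebra A] [NonUnitalCStarAlgebra R]

lemma NonUnitalStarAlgHom.injective_of_faithful_of_map_comp (φ : A →⋆ₙₐ[ℂ] R)
    (F : A → A) (E : R →L[ℂ] R) (hF : ∀ a, F (star a * a) = 0 → a = 0)
    (hφF : ∀ a, E (φ a) = φ (F a)) (hφ : ∀ a, ‖φ (F a)‖ = ‖F a‖) : Injective φ := by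
  refine (injective_iff_map_eq_zero φ).mpr fun a ha => hF a ?_
  rw [← norm_eq_zero, ← hφ, ← hφF, map_mul, map_star, ha, mul_zero, map_zero, norm_zero]

lemma NonUnitalStarAlgHom.surjective_of_injective_of_dense_span (φ : A →⋆ₙₐ[ℂ] R)
    (hφ : Injective φ) {S : Set R} (hS : Dense (span ℂ S : Set R)) (hSφ : S ⊆ Set.range φ) :
    Surjective φ := by
  have hclosed : IsClosed (Set.range φ) :=
    (NonUnitalStarAlgHom.isometry φ hφ).isClosedEmbedding.isClosed_range
  have hspan : (span ℂ S : Set R) ⊆ Set.range φ := fun r hr =>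
    LinearMap.mem_range.mp <| span_le (p := LinearMap.range (φ : A →ₗ[ℂ] R)) |>.mpr
      (fun x hx => LinearMap.mem_range.mpr (hSφ hx)) hr
  rw [← Set.range_eq_univ, ← hclosed.closure_eq]
  exact (hS.mono hspan).closure_eq

end Hom

theorem statement16_general [NonUnitalCStarAlgebra B] [PartialOrder B] [StarOrderedRing B]
    (Bg : Mor V → Submodule ℂ B)
    (hzero : ∀ f g : Mor V, g.tgt ≠ f.src →
      ∀ ⦃a b : B⦄, a ∈ Bg f → b ∈ Bg g → a * b = 0)
    (hstar : ∀ (f : Mor V) ⦃a : B⦄, a ∈ Bg f → star a ∈ Bg f.inv)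
    -- the conditional expectation, assumed faithful
    (F : B →L[ℂ] B)
    (hFrange : ∀ b : B, F b ∈ diag Bg)
    (hFfaithful : ∀ b : B, F (star b * b) = 0 → b = 0)
    -- the reduced cross sectional algebra `R = C*_r(Fb)` of the bundle `{B_g}`
    {R : Type u₁} [NonUnitalCStarAlgebra R]
    (Lam : Mor V → B →ₗ[ℂ] R)
    (hLisom : ∀ (f : Mor V) (b : B), b ∈ Bg f → ‖Lam f b‖ = ‖b‖)
    (hLdense : Dense
      (↑(Submodule.span ℂ (⋃ f : Mor V, Lam f '' (Bg f : Set B))) : Set R))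
    -- the canonical faithful conditional expectation of `C*_r(Fb)`
    (ER : R →L[ℂ] R)
    -- the canonical map `λ_B`
    (lamB : B →⋆ₙₐ[ℂ] R)
    (hlamB : ∀ (f : Mor V) (b : B), b ∈ Bg f → lamB b = Lam f b)
    (hcompat : ∀ b : B, ER (lamB b) = lamB (F b)) :
    Function.Injective lamB ∧ Function.Surjective lamB := by
  have hfibre : ∀ x : V, ∀ b ∈ Bg (Mor.id x), ‖lamB b‖ = ‖b‖ := fun x b hb =>
    (hlamB _ b hb).symm ▸ hLisom _ b hb
  have hdiag : ∀ d ∈ diag Bg, ‖lamB d‖ = ‖d‖ := fun d hd =>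
    lamB.norm_map_of_mem_closure_span_iUnion (fun x => Bg (Mor.id x))
      (fun x y hxy a ha b hb => hzero (Mor.id x).inv (Mor.id y) (Ne.symm hxy) (hstar _ ha) hb)
      (fun x y hxy a ha b hb => hzero (Mor.id x) (Mor.id y).inv (Ne.symm hxy) ha (hstar _ hb))
      hfibre hd
  have hinj : Function.Injective lamB :=
    lamB.injective_of_faithful_of_map_comp F ER hFfaithful hcompat fun b => hdiag _ (hFrange b)
  refine ⟨hinj, lamB.surjective_of_injective_of_dense_span hinj hLdense ?_⟩
  rintro _ ⟨_, ⟨f, rfl⟩, b, hb, rfl⟩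
  exact ⟨b, hlamB f b hb⟩

/-- let `B` be a topologically `G`-graded C*-algebra whose
conditional expectation `F` onto the closed span of the unit fibers is
faithful.  Then the canonical surjection `λ_B : B → C*_r(Fb)` onto the reduced
cross sectional algebra of the associated Fell bundle `Fb = {B_g}` (sending
`b_g ∈ B_g` to `Λ(b_g)`, and intertwining `F` with the canonical faithful
expectation `E` of `C*_r(Fb)`) is injective, hence a *-isomorphism. -/
theorem statement16 [NonUnitalCStarAlgebra B] [PartialOrder B] [StarOrderedRing B]
    (Bg : Mor V → Submodule ℂ B)
    (hclosed : ∀ f, IsClosed (Bg f : Set B))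
    (hmul : ∀ (f g : Mor V) (h : g.tgt = f.src) ⦃a b : B⦄,
      a ∈ Bg f → b ∈ Bg g → a * b ∈ Bg (f.comp g h))
    (hzero : ∀ f g : Mor V, g.tgt ≠ f.src →
      ∀ ⦃a b : B⦄, a ∈ Bg f → b ∈ Bg g → a * b = 0)
    (hstar : ∀ (f : Mor V) ⦃a : B⦄, a ∈ Bg f → star a ∈ Bg f.inv)
    (hdense : Dense (↑(Submodule.span ℂ (⋃ f : Mor V, (Bg f : Set B))) : Set B))
    (hind : ∀ (s : Finset (Mor V)) (b : Mor V → B), (∀ f, b f ∈ Bg f) →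
      (∑ f ∈ s, b f) = 0 → ∀ f ∈ s, b f = 0)
    -- the conditional expectation, assumed faithful
    (F : B →L[ℂ] B)
    (hFnorm : ‖F‖ ≤ 1)
    (hFpos : ∀ b : B, 0 ≤ b → 0 ≤ F b)
    (hFrange : ∀ b : B, F b ∈ diag Bg)
    (hFid : ∀ b ∈ diag Bg, F b = b)
    (hF0 : ∀ f : Mor V, ¬ f.IsId → ∀ b ∈ Bg f, F b = 0)
    (hFfaithful : ∀ b : B, F (star b * b) = 0 → b = 0)
    -- the reduced cross sectional algebra `R = C*_r(Fb)` of the bundle `{B_g}`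
    {R : Type u₁} [NonUnitalCStarAlgebra R] [PartialOrder R] [StarOrderedRing R]
    (Lam : Mor V → B →ₗ[ℂ] R)
    (hLmul : ∀ (f g : Mor V) (h : g.tgt = f.src) (b c : B), b ∈ Bg f →
      c ∈ Bg g → Lam f b * Lam g c = Lam (f.comp g h) (b * c))
    (hLzero : ∀ f g : Mor V, g.tgt ≠ f.src → ∀ b c : B, b ∈ Bg f →
      c ∈ Bg g → Lam f b * Lam g c = 0)
    (hLstar : ∀ (f : Mor V) (b : B), b ∈ Bg f → star (Lam f b) = Lam f.inv (star b))
    (hLisom : ∀ (f : Mor V) (b : B), b ∈ Bg f → ‖Lam f b‖ = ‖b‖)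
    (hLdense : Dense
      (↑(Submodule.span ℂ (⋃ f : Mor V, Lam f '' (Bg f : Set B))) : Set R))
    -- the canonical faithful conditional expectation of `C*_r(Fb)`
    (ER : R →L[ℂ] R)
    (hER₁ : ∀ (x : V) (b : B), b ∈ Bg (Mor.id x) →
      ER (Lam (Mor.id x) b) = Lam (Mor.id x) b)
    (hER₂ : ∀ (f : Mor V), ¬ f.IsId → ∀ b ∈ Bg f, ER (Lam f b) = 0)
    (hERfaithful : ∀ r : R, 0 ≤ r → ER r = 0 → r = 0)
    -- the canonical map `λ_B`
    (lamB : B →⋆ₙₐ[ℂ] R)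
    (hlamB : ∀ (f : Mor V) (b : B), b ∈ Bg f → lamB b = Lam f b)
    (hcompat : ∀ b : B, ER (lamB b) = lamB (F b)) :
    Function.Injective lamB ∧ Function.Surjective lamB :=
  statement16_general Bg hzero hstar F hFrange hFfaithful Lam hLisom hLdense ER lamB hlamB hcompat
end
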